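/- In the Cartesian tree of an array A of distinct values, node v (identified with its inorder rank) has a left child if and only if v ≥ 2 and A[v] < A[v-1]. -/

import Mathlib

inductive BT where
  | leaf : BT
  | node : BT → BT → BT
deriving DecidableEq

namespace BT

/-- Number of nodes. -/
def size : BT → ℕ
  | leaf => 0
  | node l r => l.size + r.size + 1

/-- Inorder list of node positions (paths from the root; `false` = left step). -/
def inList : BT → List (List Bool)
  | leaf => []
  | node l r => (l.inList).map (List.cons false) ++ [] :: (r.inList).map (List.cons true)

/-- Preorder list of node positions. -/
def preList : BT → List (List Bool)
  | leaf => []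
  | node l r => [] :: ((l.preList).map (List.cons false) ++ (r.preList).map (List.cons true))

/-- Subtree rooted at a given position, if the position is valid. -/
def subtree? : BT → List Bool → Option BT
  | t, [] => some t
  | leaf, _ :: _ => none
  | node l r, b :: p => if b then r.subtree? p else l.subtree? p

/-- Size of the left spine (maximal path following left children, top node included). -/
def Lspine : BT → ℕ
  | leaf => 0
  | node l _ => l.Lspine + 1

/-- Size of the right spine. -/
def Rspine : BT → ℕ
  | leaf => 0
  | node _ r => r.Rspine + 1

/-- Size of the left inner spine of the root: right spine of the left child. -/
def lv : BT → ℕ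
  | leaf => 0
  | node l _ => l.Rspine

/-- Size of the right inner spine of the root: left spine of the right child. -/
def rv : BT → ℕ
  | leaf => 0
  | node _ r => r.Lspine

/-- Sum of `f` over all (sub)trees rooted at nodes of the tree. -/
def sumNodes (f : BT → ℕ) : BT → ℕ
  | leaf => 0
  | node l r => f (node l r) + sumNodes f l + sumNodes f r

/-- Number of leaf nodes (nodes with no children). -/
def leaves : BT → ℕ
  | leaf => 0
  | node leaf leaf => 1
  | node l r => leaves l + leaves r

end BT

/-- Longest common prefix of two paths: the LCA of two positions in a binary tree. -/
def lcp : List Bool → List Bool → List Bool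
  | a :: p, b :: q => if a = b then a :: lcp p q else []
  | _, _ => []

/-- Index of the minimum element of a list (0 if empty). -/
def minIdx {α : Type*} [LinearOrder α] (l : List α) : ℕ :=
  match l.argmin id with
  | none => 0
  | some a => l.idxOf a

/-- Cartesian tree construction with fuel. -/
def cartesianAux {α : Type*} [LinearOrder α] : ℕ → List α → BT
  | 0, _ => .leaf
  | _ + 1, [] => .leaf
  | n + 1, l@(_ :: _) =>
      .node (cartesianAux n (l.take (minIdx l))) (cartesianAux n (l.drop (minIdx l + 1)))

/-- The Cartesian tree of a list: root at the position of the minimum,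
recursively built on the prefix before and the suffix after the minimum. -/
def cartesian {α : Type*} [LinearOrder α] (l : List α) : BT :=
  cartesianAux l.length l

/-- `k` is the position of the minimum of `A` on the range `[i, j]`. -/
def isArgmin {α : Type*} [LinearOrder α] {n : ℕ} (A : Fin n → α) (i j k : Fin n) : Prop :=
  i ≤ k ∧ k ≤ j ∧ ∀ m, i ≤ m → m ≤ j → A k ≤ A m

/-- `k` is the position of the second smallest element of `A` on the range `[i, j]`. -/
def isSecondMin {α : Type*} [LinearOrder α] {n : ℕ} (A : Fin n → α) (i j k : Fin n) : Prop :=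
  i ≤ k ∧ k ≤ j ∧
    ∃ m, isArgmin A i j m ∧ k ≠ m ∧ ∀ l, i ≤ l → l ≤ j → l ≠ m → A k ≤ A l

/-- The node with inorder number `i` in `t` has a left child. -/
def hasLeftChildAt (t : BT) (i : ℕ) : Prop :=
  ∃ (p : List Bool) (ll lr r : BT),
    t.inList[i]? = some p ∧ t.subtree? p = some (.node (.node ll lr) r)

/-!
Induct along the construction of the tree. At the root `k = minIdx l` there is a left child iff
the prefix `l.take k` is nonempty, i.e. `1 ≤ k`, and then `l[k] < l[k - 1]` because `minIdx`
is the *first* position of the minimum. Inside the left and right blocks the claim is inherited,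
except at the first node of the right block: it has no left child, and `l[k] ≤ l[k + 1]`.
-/

section CartesianTree

variable {α : Type*} [LinearOrder α]

theorem minIdx_spec {l : List α} (hl : l ≠ []) :
    ∃ a ∈ l, (∀ b ∈ l, a ≤ b) ∧ minIdx l = l.idxOf a := by
  obtain ⟨a, ha⟩ := Option.ne_none_iff_exists'.mp (mt (List.argmin_eq_none (f := id)).mp hl)
  exact ⟨a, List.argmin_mem ha, fun b hb => List.le_of_mem_argmin hb ha, by simp [minIdx, ha]⟩

theorem minIdx_lt_length {l : List α} (hl : l ≠ []) : minIdx l < l.length := by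
  obtain ⟨a, ha, -, h⟩ := minIdx_spec hl
  exact h ▸ List.idxOf_lt_length_of_mem ha

theorem getElem_minIdx_le {l : List α} (hl : l ≠ []) {j : ℕ} (hj : j < l.length) :
    l[minIdx l]'(minIdx_lt_length hl) ≤ l[j] := by
  obtain ⟨a, ha, hmin, h⟩ := minIdx_spec hl
  simp only [h, List.getElem_idxOf]
  exact hmin _ (List.getElem_mem hj)

theorem getElem_minIdx_lt_of_lt {l : List α} (hl : l ≠ []) {j : ℕ} (hj : j < minIdx l) :
    l[minIdx l]'(minIdx_lt_length hl) < l[j]'(hj.trans (minIdx_lt_length hl)) := by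
  refine (getElem_minIdx_le hl _).lt_of_ne fun heq => ?_
  obtain ⟨a, -, -, h⟩ := minIdx_spec hl
  have := List.not_of_lt_findIdx (h ▸ hj : j < l.idxOf a)
  simp_all [List.getElem_idxOf]

theorem cartesianAux_eq_cartesianAux {m k : ℕ} {l : List α} (hm : l.length ≤ m)
    (hk : l.length ≤ k) : cartesianAux m l = cartesianAux k l := by
  induction m generalizing k l with
  | zero => rw [List.length_eq_zero_iff.mp (Nat.le_zero.mp hm)]; cases k <;> rfl
  | succ m ih =>
    match l, k with
    | [], 0 | [], _ + 1 => rfl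
    | x :: xs, k + 1 =>
      have := minIdx_lt_length (List.cons_ne_nil x xs)
      simp only [List.length_cons] at this hm hk
      simp only [cartesianAux]
      congr 1 <;> apply ih <;> simp only [List.length_take, List.length_drop, List.length_cons] <;>
        omega

theorem cartesian_eq_node {l : List α} (hl : l ≠ []) :
    cartesian l = .node (cartesian (l.take (minIdx l))) (cartesian (l.drop (minIdx l + 1))) := by
  obtain ⟨x, xs, rfl⟩ := List.exists_cons_of_ne_nil hl
  have := minIdx_lt_length hl
  simp only [List.length_cons] at this
  simp only [cartesian, List.length_cons, cartesianAux]
  congr 1 <;> apply cartesianAux_eq_cartesianAux <;>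
    simp only [List.length_take, List.length_drop, List.length_cons] <;> omega

theorem cartesian_induction {motive : List α → Prop} (nil : motive [])
    (node : ∀ l, l ≠ [] → motive (l.take (minIdx l)) → motive (l.drop (minIdx l + 1)) → motive l) :
    ∀ l, motive l
  | [] => nil
  | x :: xs =>
    have := minIdx_lt_length (List.cons_ne_nil x xs)
    node _ (List.cons_ne_nil x xs) (cartesian_induction nil node _)
      (cartesian_induction nil node _)
termination_by l => l.length
decreasing_by all_goals simp only [List.length_take, List.length_drop, List.length_cons] at *; omega

theorem size_cartesian (l : List α) : (cartesian l).size = l.length := by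
  induction l using cartesian_induction with
  | nil => rfl
  | node l hl ihl ihr =>
    have := minIdx_lt_length hl
    rw [cartesian_eq_node hl, BT.size, ihl, ihr]
    simp only [List.length_take, List.length_drop]
    omega

theorem cartesian_eq_leaf_iff {l : List α} : cartesian l = .leaf ↔ l = [] := by
  refine ⟨fun h => ?_, fun h => h ▸ rfl⟩
  simpa [h, BT.size] using (size_cartesian l).symm

namespace BT

theorem length_inList (t : BT) : t.inList.length = t.size := by
  induction t with
  | leaf => rfl
  | node l r ihl ihr =>
    simp only [inList, size, List.length_append, List.length_map, List.length_cons, ihl, ihr]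
    omega

theorem hasLeftChildAt_node_of_lt {L R : BT} {i : ℕ} (hi : i < L.size) :
    hasLeftChildAt (node L R) i ↔ hasLeftChildAt L i := by
  rw [← length_inList] at hi
  simp [hasLeftChildAt, inList, List.getElem?_append_left, hi, subtree?]

theorem hasLeftChildAt_node_size {L R : BT} :
    hasLeftChildAt (node L R) L.size ↔ L ≠ leaf := by
  rw [← length_inList]
  cases L <;> simp [hasLeftChildAt, inList, subtree?]

theorem hasLeftChildAt_node_add {L R : BT} {j : ℕ} :
    hasLeftChildAt (node L R) (L.size + 1 + j) ↔ hasLeftChildAt R j := by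
  rw [← length_inList, hasLeftChildAt, hasLeftChildAt, inList, add_assoc, add_comm 1 j,
    List.getElem?_append_right (by simp)]
  simp [subtree?]

end BT

theorem hasLeftChildAt_cartesian_iff (l : List α) {i : ℕ} (hi : i < l.length) :
    hasLeftChildAt (cartesian l) i ↔ 1 ≤ i ∧ l[i] < l[i - 1] := by
  induction l using cartesian_induction generalizing i with
  | nil => simp at hi
  | node l hl ihl ihr =>
    have hk := minIdx_lt_length hl
    have hsize : (cartesian (l.take (minIdx l))).size = minIdx l := by
      simp [size_cartesian, hk.le]
    rw [cartesian_eq_node hl]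
    rcases lt_trichotomy i (minIdx l) with hik | rfl | hik
    · rw [BT.hasLeftChildAt_node_of_lt (hik.trans_eq hsize.symm), ihl (by simp [hik, hi])]
      simp
    · have hroot := BT.hasLeftChildAt_node_size (L := cartesian (l.take (minIdx l)))
        (R := cartesian (l.drop (minIdx l + 1)))
      rw [hsize] at hroot
      rw [hroot, ne_eq, cartesian_eq_leaf_iff, List.take_eq_nil_iff]
      constructor
      · intro h
        have : minIdx l ≠ 0 := fun h0 => h (Or.inl h0)
        exact ⟨by omega, getElem_minIdx_lt_of_lt hl (by omega)⟩
      · rintro ⟨h, -⟩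
        simp only [hl, or_false]
        omega
    · obtain ⟨j, rfl⟩ : ∃ j, i = minIdx l + 1 + j := ⟨i - minIdx l - 1, by omega⟩
      have hright := BT.hasLeftChildAt_node_add (L := cartesian (l.take (minIdx l)))
        (R := cartesian (l.drop (minIdx l + 1))) (j := j)
      rw [hsize] at hright
      rw [hright, ihr (by simp only [List.length_drop]; omega)]
      rcases j with _ | j
      · simpa using (getElem_minIdx_le hl _).not_gt
      · simp [Nat.one_le_iff_ne_zero]

end CartesianTree

theorem stmt5_general {α : Type*} [LinearOrder α] {n : ℕ} (A : Fin n → α)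
    (v : Fin n) :
    hasLeftChildAt (cartesian (List.ofFn A)) (v : ℕ) ↔
      1 ≤ (v : ℕ) ∧
        A v < A ⟨(v : ℕ) - 1, Nat.lt_of_le_of_lt (Nat.sub_le _ _) v.isLt⟩ := by
  rw [hasLeftChildAt_cartesian_iff _ (by simp)]
  simp

/-- Node `v` of the Cartesian tree of `A` has a left child iff `v ≥ 1` (0-indexed)
and `A[v] < A[v-1]`. -/
theorem stmt5 {α : Type*} [LinearOrder α] {n : ℕ} (A : Fin n → α)
    (hA : Function.Injective A) (v : Fin n) :
    hasLeftChildAt (cartesian (List.ofFn A)) (v : ℕ) ↔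
      1 ≤ (v : ℕ) ∧
        A v < A ⟨(v : ℕ) - 1, Nat.lt_of_le_of_lt (Nat.sub_le _ _) v.isLt⟩ :=
  stmt5_general A v
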